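/- Let (X,d,μ) be a doubling metric measure space and ρ admissible. Suppose E_t(x,y) ≥ 0 satisfies |E_t(x,y)| ≤ C [μ(B(x,t))+μ(B(x,d(x,y)))]⁻¹ (t/(t+d(x,y)))^{δ₂} (t/(t+ρ(x)))^{δ₁} for some δ₁, δ₂ > 0, and define E_ρ⁺(f)(x) = sup_{0<t<ρ(x)} |∫ E_t(x,y) f(y) dμ(y)|. Then E_ρ⁺ is bounded on L¹(X): there exists C' with ‖E_ρ⁺(f)‖_{L¹(X)} ≤ C' ‖f‖_{L¹(X)} for all f ∈ L¹(X). -/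

import Mathlib

/-!
The maximal function is dominated by a single kernel. Let `R ≈ ρ` be an upper semicontinuous
majorant of `ρ`, `d = dist x y` and `s = d / R(y)`. Off the diagonal,
`K(x, y) = A (C min(s, 1/s))^γ / μ(B(y, d))` dominates `|E_t(x, y)|` for every `t < ρ(x)`: the
factor `(t / (t + d))^δ₂` with `t < ρ(x)` and admissibility give the decay `(R / d)^γ` far from
`y`, while reverse doubling and the factor `(t / (t + ρ(x)))^δ₁` give `(d / R)^γ` near `y`.
Summing over the dyadic annuli around `y`, doubling bounds `∫ K(x, y) dμ(x)` uniformly in `y`, and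
Tonelli gives the `L¹` bound. Reverse doubling also makes points null, and doubling makes balls
totally bounded, so `X` is second countable and `K` is jointly measurable.
-/

open Metric MeasureTheory ENNReal

theorem secondCountableTopology_of_totallyBounded_ball {X : Type*} [MetricSpace X]
    (h : ∀ (c : X) r, TotallyBounded (ball c r)) :
    SecondCountableTopology X := by
  suffices TopologicalSpace.SeparableSpace X from UniformSpace.secondCountable_of_separable X
  rcases isEmpty_or_nonempty X with hX | ⟨⟨x₀⟩⟩
  · infer_instance
  · rw [← TopologicalSpace.isSeparable_univ_iff, ← iUnion_ball_nat x₀]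
    exact .iUnion fun n => (h x₀ n).isSeparable

theorem ENNReal.tsum_pow_natAbs (q : ℝ≥0∞) : ∑' j : ℤ, q ^ j.natAbs = (1 + q) * (1 - q)⁻¹ := by
  rw [tsum_of_nat_of_neg_add_one ENNReal.summable ENNReal.summable]
  have h : ∀ n : ℕ, q ^ (-((n : ℤ) + 1)).natAbs = q * q ^ n := fun n => by
    rw [show (-((n : ℤ) + 1)).natAbs = n + 1 by omega, pow_succ']
  simp only [Int.natAbs_natCast, h, ENNReal.tsum_mul_left, ENNReal.tsum_geometric]
  ring

lemma min_self_inv_le_of_mem_Ico {s : ℝ} {j : ℤ} (hs : s ∈ Set.Ico ((2 : ℝ) ^ j) (2 ^ (j + 1))) :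
    min s s⁻¹ ≤ 2 * 2⁻¹ ^ j.natAbs := by
  have h2 : (0 : ℝ) < 2 ^ j := zpow_pos two_pos j
  rcases Int.natAbs_eq j with hj | hj
  · calc min s s⁻¹ ≤ s⁻¹ := min_le_right _ _
      _ ≤ (2 ^ j)⁻¹ := inv_anti₀ h2 hs.1
      _ ≤ 2 * 2⁻¹ ^ j.natAbs := by
          rw [hj, zpow_natCast, ← inv_pow, Int.natAbs_natCast]
          linarith [pow_nonneg (inv_nonneg.2 zero_le_two : (0 : ℝ) ≤ 2⁻¹) j.natAbs]
  · calc min s s⁻¹ ≤ s := min_le_left _ _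
      _ ≤ 2 ^ (j + 1) := hs.2.le
      _ = 2 * 2⁻¹ ^ j.natAbs := by
          rw [zpow_add_one₀ two_ne_zero, mul_comm]
          nth_rewrite 1 [hj]
          rw [zpow_neg, zpow_natCast, inv_pow]

section DoublingMeasure

variable {X : Type*} [MetricSpace X] [MeasurableSpace X] {μ : Measure X} {D : ℝ≥0∞}

theorem measure_ball_two_mul_le_ofReal {C : ℝ} (hC : 0 ≤ C) (hfin : ∀ x r, μ (ball x r) ≠ ∞)
    (hdouble : ∀ (x : X) r, 0 < r → (μ (ball x (2 * r))).toReal ≤ C * (μ (ball x r)).toReal)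
    (x : X) (r : ℝ) : μ (ball x (2 * r)) ≤ ENNReal.ofReal C * μ (ball x r) := by
  rcases le_or_gt r 0 with hr | hr
  · simp [ball_eq_empty.2 (by linarith : 2 * r ≤ 0)]
  rw [← ENNReal.ofReal_toReal (hfin x (2 * r)), ← ENNReal.ofReal_toReal (hfin x r),
    ← ENNReal.ofReal_mul hC]
  exact ENNReal.ofReal_le_ofReal (hdouble x r hr)

theorem measure_ball_two_pow_mul_le (hdouble : ∀ x r, μ (ball x (2 * r)) ≤ D * μ (ball x r))
    (k : ℕ) (x : X) (r : ℝ) : μ (ball x (2 ^ k * r)) ≤ D ^ k * μ (ball x r) := by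
  induction k with
  | zero => simp
  | succ k ih =>
    calc μ (ball x (2 ^ (k + 1) * r)) = μ (ball x (2 * (2 ^ k * r))) := by ring_nf
      _ ≤ D * μ (ball x (2 ^ k * r)) := hdouble x _
      _ ≤ D * (D ^ k * μ (ball x r)) := by gcongr
      _ = D ^ (k + 1) * μ (ball x r) := by ring

-- Disjoint balls of radius `ε / 2` around an `ε`-separated sequence would each carry a fixed
-- fraction of `μ (ball c r)`, but they all lie in the ball `ball c (r + ε)` of finite measure.
theorem totallyBounded_ball_of_doubling [OpensMeasurableSpace X] (hD : D ≠ ∞)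
    (hpos : ∀ x r, 0 < r → μ (ball x r) ≠ 0) (hfin : ∀ x r, μ (ball x r) ≠ ∞)
    (hdouble : ∀ x r, μ (ball x (2 * r)) ≤ D * μ (ball x r)) (c : X) (r : ℝ) :
    TotallyBounded (ball c r) := by
  rcases le_or_gt r 0 with hr | hr
  · simp [ball_eq_empty.2 hr]
  refine totallyBounded_iff.2 fun ε hε => ?_
  by_contra! hcover
  obtain ⟨u, hu⟩ : ∃ u : ℕ → X, ∀ n, u n ∈ ball c r ∧ ∀ y ∈ u '' Set.Iio n, ε ≤ dist y (u n) := by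
    refine Set.seq_of_forall_finite_exists (P := fun z t => z ∈ ball c r ∧ ∀ y ∈ t, ε ≤ dist y z)
      fun t ht => ?_
    obtain ⟨z, hz, hzt⟩ := Set.not_subset.1 (hcover t ht)
    simp only [Set.mem_iUnion, mem_ball, not_exists, not_lt] at hzt
    exact ⟨z, hz, fun y hy => dist_comm z y ▸ hzt y hy⟩
  have hsep : Pairwise (Function.onFun Disjoint fun n => ball (u n) (ε / 2)) := by
    refine fun m n hmn => ball_disjoint_ball ?_
    rcases hmn.lt_or_gt with h | h
    · linarith [(hu n).2 (u m) ⟨m, h, rfl⟩]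
    · linarith [dist_comm (u m) (u n) ▸ (hu m).2 (u n) ⟨n, h, rfl⟩]
  obtain ⟨k, hk⟩ := pow_unbounded_of_one_lt (4 * r / ε) (one_lt_two (α := ℝ))
  have hlower : ∀ n, μ (ball c r) ≤ D ^ k * μ (ball (u n) (ε / 2)) := by
    intro n
    refine le_trans (measure_mono fun z hz => ?_) (measure_ball_two_pow_mul_le hdouble k _ _)
    rw [div_lt_iff₀ hε] at hk
    have := dist_triangle z c (u n)
    rw [mem_ball] at hz ⊢
    linarith [mem_ball'.1 (hu n).1]
  have hupper : (⋃ n, ball (u n) (ε / 2)) ⊆ ball c (r + ε) := by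
    refine Set.iUnion_subset fun n z hz => ?_
    have := dist_triangle z (u n) c
    rw [mem_ball] at hz ⊢
    linarith [mem_ball.1 (hu n).1]
  have : ∞ ≤ D ^ k * μ (ball c (r + ε)) :=
    calc ∞ = ∑' _ : ℕ, μ (ball c r) := (ENNReal.tsum_const_eq_top_of_ne_zero (hpos c r hr)).symm
      _ ≤ ∑' n, D ^ k * μ (ball (u n) (ε / 2)) := ENNReal.tsum_le_tsum hlower
      _ = D ^ k * μ (⋃ n, ball (u n) (ε / 2)) := by
        rw [ENNReal.tsum_mul_left, measure_iUnion hsep fun _ => measurableSet_ball]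
      _ ≤ D ^ k * μ (ball c (r + ε)) := by gcongr
  exact (ENNReal.mul_ne_top (ENNReal.pow_ne_top hD) (hfin c _)) (top_le_iff.1 this)

theorem measure_singleton_eq_zero_of_reverse_doubling {C₂ κ : ℝ} {z : X} (hC₂ : 0 < C₂)
    (hκ : 0 < κ) (hfin : ∀ r, μ (ball z r) ≠ ∞)
    (hrev : ∀ r lam : ℝ, 0 < r → 1 ≤ lam →
      C₂⁻¹ * lam ^ κ * (μ (ball z r)).toReal ≤ (μ (ball z (lam * r))).toReal) :
    μ {z} = 0 := by
  have hz : ∀ r, 0 < r → μ {z} ≤ μ (ball z r) := fun r hr =>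
    measure_mono (Set.singleton_subset_iff.2 (mem_ball_self hr))
  have hbound : ∀ lam : ℝ, 1 ≤ lam →
      (μ {z}).toReal ≤ C₂ * lam ^ (-κ) * (μ (ball z 1)).toReal := by
    intro lam hlam
    have hlam0 : 0 < lam := by linarith
    have h := hrev lam⁻¹ lam (inv_pos.2 hlam0) hlam
    rw [mul_inv_cancel₀ hlam0.ne'] at h
    calc (μ {z}).toReal ≤ (μ (ball z lam⁻¹)).toReal :=
          ENNReal.toReal_mono (hfin _) (hz _ (inv_pos.2 hlam0))
      _ = C₂ * lam ^ (-κ) * (C₂⁻¹ * lam ^ κ * (μ (ball z lam⁻¹)).toReal) := by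
          rw [Real.rpow_neg hlam0.le]
          field_simp
      _ ≤ C₂ * lam ^ (-κ) * (μ (ball z 1)).toReal := by gcongr
  have hlim : Filter.Tendsto (fun lam : ℝ => C₂ * lam ^ (-κ) * (μ (ball z 1)).toReal)
      Filter.atTop (nhds 0) := by
    simpa using ((tendsto_rpow_neg_atTop hκ).const_mul C₂).mul_const (μ (ball z 1)).toReal
  have h0 : (μ {z}).toReal ≤ 0 := ge_of_tendsto hlim (Filter.eventually_ge_atTop 1 |>.mono hbound)
  exact (ENNReal.toReal_eq_zero_iff _).1 (le_antisymm h0 ENNReal.toReal_nonneg) |>.resolve_right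
    (ne_top_of_le_ne_top (hfin 1) (hz 1 one_pos))

theorem measurable_measure_ball [OpensMeasurableSpace X] [SecondCountableTopology X] [SFinite μ] :
    Measurable fun p : X × ℝ => μ (ball p.1 p.2) :=
  measurable_measure_prodMk_left (isOpen_lt (continuous_snd.dist continuous_fst.fst)
    continuous_fst.snd).measurableSet

-- Split `X \ {y}` into the annuli `2 ^ j R ≤ dist x y < 2 ^ (j + 1) R`; by doubling each annulus
-- has measure at most `D μ (ball y (2 ^ j R))`, which cancels the denominator.
theorem lintegral_div_measure_ball_le {y : X} {R : ℝ} (hR : 0 < R) (hy : μ {y} = 0)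
    (hdouble : ∀ r, μ (ball y (2 * r)) ≤ D * μ (ball y r)) (φ : ℝ → ℝ≥0∞) (c : ℤ → ℝ≥0∞)
    (hφ : ∀ j : ℤ, ∀ s ∈ Set.Ico ((2 : ℝ) ^ j) (2 ^ (j + 1)), φ s ≤ c j) :
    ∫⁻ x, φ (dist x y / R) / μ (ball y (dist x y)) ∂μ ≤ D * ∑' j, c j := by
  set F := fun x => φ (dist x y / R) / μ (ball y (dist x y))
  set A : ℤ → Set X := fun j => {x | dist x y / R ∈ Set.Ico ((2 : ℝ) ^ j) (2 ^ (j + 1))}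
  have hcover : Set.univ ⊆ {y} ∪ ⋃ j, A j := by
    intro x _
    rcases eq_or_ne x y with rfl | hxy
    · exact Or.inl rfl
    · exact Or.inr (Set.mem_iUnion.2 (exists_mem_Ico_zpow (div_pos (dist_pos.2 hxy) hR) one_lt_two))
  have hannulus : ∀ j, ∫⁻ x in A j, F x ∂μ ≤ D * c j := by
    intro j
    set m := μ (ball y (2 ^ j * R))
    have hF : ∀ x ∈ A j, F x ≤ c j / m := fun x hx =>
      ENNReal.div_le_div (hφ j _ hx) (measure_mono (ball_subset_ball ((le_div_iff₀ hR).1 hx.1)))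
    have hA : μ (A j) ≤ D * m := by
      refine le_trans (measure_mono fun x hx => ?_) (hdouble _)
      rw [mem_ball, ← mul_assoc, ← zpow_one_add₀ two_ne_zero, add_comm]
      exact (div_lt_iff₀ hR).1 hx.2
    calc ∫⁻ x in A j, F x ∂μ ≤ ∫⁻ _ in A j, c j / m ∂μ := setLIntegral_mono measurable_const hF
      _ = c j / m * μ (A j) := setLIntegral_const _ _
      _ ≤ c j / m * (D * m) := by gcongr
      _ = D * c j * (m⁻¹ * m) := by rw [div_eq_mul_inv]; ring
      _ ≤ D * c j := mul_le_of_le_one_right' (ENNReal.inv_mul_le_one m)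
  calc ∫⁻ x, F x ∂μ = ∫⁻ x in Set.univ, F x ∂μ := setLIntegral_univ _ |>.symm
    _ ≤ ∫⁻ x in {y} ∪ ⋃ j, A j, F x ∂μ := lintegral_mono_set hcover
    _ ≤ ∫⁻ x in {y}, F x ∂μ + ∫⁻ x in ⋃ j, A j, F x ∂μ := lintegral_union_le _ _ _
    _ ≤ 0 + ∑' j, ∫⁻ x in A j, F x ∂μ := by
        rw [Measure.restrict_eq_zero.2 hy, lintegral_zero_measure]
        gcongr
        exact lintegral_iUnion_le _ _
    _ ≤ D * ∑' j, c j := by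
        rw [zero_add, ← ENNReal.tsum_mul_left]
        exact ENNReal.tsum_le_tsum hannulus

end DoublingMeasure

noncomputable def admissibleBound (C₃ k₀ p d : ℝ) : ℝ :=
  C₃ * p ^ (1 / (1 + k₀)) * (p + d) ^ (k₀ / (1 + k₀))

structure IsAdmissible {X : Type*} [MetricSpace X] (ρ : X → ℝ) (C₃ k₀ : ℝ) : Prop where
  pos : ∀ x, 0 < ρ x
  le_admissibleBound : ∀ x y, ρ y ≤ admissibleBound C₃ k₀ (ρ x) (dist x y)

namespace admissibleBound

variable {C₃ k₀ p d : ℝ}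

lemma exponent_add (hk₀ : 0 ≤ k₀) : 1 / (1 + k₀) + k₀ / (1 + k₀) = 1 := by
  field_simp

lemma exponent_le_one (hk₀ : 0 ≤ k₀) : k₀ / (1 + k₀) ≤ 1 :=
  (div_le_one (by linarith)).2 (by linarith)

lemma nonneg (hC₃ : 0 ≤ C₃) (hp : 0 ≤ p) (hd : 0 ≤ d) :
    0 ≤ admissibleBound C₃ k₀ p d := by
  unfold admissibleBound; positivity

lemma zero_right (hk₀ : 0 ≤ k₀) (hp : 0 < p) : admissibleBound C₃ k₀ p 0 = C₃ * p := by
  rw [admissibleBound, add_zero, mul_assoc, ← Real.rpow_add hp, exponent_add hk₀, Real.rpow_one]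

lemma mono_left {q : ℝ} (hk₀ : 0 ≤ k₀) (hC₃ : 0 ≤ C₃) (hp : 0 ≤ p) (hpq : p ≤ q) (hd : 0 ≤ d) :
    admissibleBound C₃ k₀ p d ≤ admissibleBound C₃ k₀ q d := by
  have hq := hp.trans hpq
  unfold admissibleBound; gcongr

lemma le_mul_max (hk₀ : 0 ≤ k₀) (hC₃ : 0 ≤ C₃) (hp : 0 ≤ p) (hd : 0 ≤ d) :
    admissibleBound C₃ k₀ p d ≤ 2 * C₃ * p ^ (1 / (1 + k₀)) * max p d ^ (k₀ / (1 + k₀)) := by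
  have hb := exponent_le_one hk₀
  have hmax : 0 ≤ max p d := le_max_of_le_left hp
  calc admissibleBound C₃ k₀ p d ≤ C₃ * p ^ (1 / (1 + k₀)) * (2 * max p d) ^ (k₀ / (1 + k₀)) := by
        unfold admissibleBound; gcongr; linarith [le_max_left p d, le_max_right p d]
    _ = 2 ^ (k₀ / (1 + k₀)) * C₃ * p ^ (1 / (1 + k₀)) * max p d ^ (k₀ / (1 + k₀)) := by
        rw [Real.mul_rpow zero_le_two hmax]; ring
    _ ≤ 2 * C₃ * p ^ (1 / (1 + k₀)) * max p d ^ (k₀ / (1 + k₀)) := by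
        gcongr
        exact Real.rpow_le_self_of_one_le one_le_two hb

lemma le_two_mul_max (hk₀ : 0 ≤ k₀) (hC₃ : 0 ≤ C₃) (hp : 0 ≤ p) (hd : 0 ≤ d) :
    admissibleBound C₃ k₀ p d ≤ 2 * C₃ * max p d := by
  have hmax : 0 ≤ max p d := le_max_of_le_left hp
  calc admissibleBound C₃ k₀ p d ≤ 2 * C₃ * p ^ (1 / (1 + k₀)) * max p d ^ (k₀ / (1 + k₀)) :=
        le_mul_max hk₀ hC₃ hp hd
    _ ≤ 2 * C₃ * max p d ^ (1 / (1 + k₀)) * max p d ^ (k₀ / (1 + k₀)) := by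
        gcongr; exact le_max_left p d
    _ = 2 * C₃ * max p d := by
        rw [mul_assoc, ← Real.rpow_add' hmax (by rw [exponent_add hk₀]; exact one_ne_zero),
          exponent_add hk₀, Real.rpow_one]

lemma le_of_le (hk₀ : 0 ≤ k₀) (hC₃ : 0 ≤ C₃) (hp : 0 ≤ p) (hpd : p ≤ d) (hd : 0 < d) :
    admissibleBound C₃ k₀ p d ≤ 2 * C₃ * (p / d) ^ (1 / (1 + k₀)) * d := by
  calc admissibleBound C₃ k₀ p d ≤ 2 * C₃ * p ^ (1 / (1 + k₀)) * max p d ^ (k₀ / (1 + k₀)) :=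
        le_mul_max hk₀ hC₃ hp hd.le
    _ = 2 * C₃ * (p / d) ^ (1 / (1 + k₀)) * d := by
        have hsplit : d ^ (1 / (1 + k₀)) * d ^ (k₀ / (1 + k₀)) = d := by
          rw [← Real.rpow_add hd, exponent_add hk₀, Real.rpow_one]
        have hda : d ^ (1 / (1 + k₀)) ≠ 0 := by positivity
        rw [max_eq_right hpd, Real.div_rpow hp hd.le]
        field_simp
        linear_combination (C₃ * p ^ (1 / (1 + k₀))) * hsplit

end admissibleBound

-- `ρ` need not be measurable; this infimum of continuous functions is upper semicontinuous and
-- comparable to `ρ`.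
noncomputable def admissibleMajorant {X : Type*} [MetricSpace X] (ρ : X → ℝ) (C₃ k₀ : ℝ) (y : X) :
    ℝ :=
  ⨅ x, admissibleBound C₃ k₀ (ρ x) (dist x y)

namespace IsAdmissible

variable {X : Type*} [MetricSpace X] {ρ : X → ℝ} {C₃ k₀ : ℝ}

lemma one_le (h : IsAdmissible ρ C₃ k₀) (hk₀ : 0 ≤ k₀) (x : X) : 1 ≤ C₃ := by
  have hx := h.le_admissibleBound x x
  rw [dist_self, admissibleBound.zero_right hk₀ (h.pos x)] at hx
  exact le_of_mul_le_mul_right (by linarith) (h.pos x)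

lemma le_two_mul_max (h : IsAdmissible ρ C₃ k₀) (hk₀ : 0 ≤ k₀) (x y : X) :
    ρ y ≤ 2 * C₃ * max (ρ x) (dist x y) :=
  (h.le_admissibleBound x y).trans <| admissibleBound.le_two_mul_max hk₀
    (zero_le_one.trans (h.one_le hk₀ x)) (h.pos x).le dist_nonneg

lemma bddBelow_admissibleBound (h : IsAdmissible ρ C₃ k₀) (hk₀ : 0 ≤ k₀) (y : X) :
    BddBelow (Set.range fun x => admissibleBound C₃ k₀ (ρ x) (dist x y)) :=
  ⟨0, Set.forall_mem_range.2 fun x => admissibleBound.nonneg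
    (zero_le_one.trans (h.one_le hk₀ y)) (h.pos x).le dist_nonneg⟩

lemma le_admissibleMajorant (h : IsAdmissible ρ C₃ k₀) (y : X) :
    ρ y ≤ admissibleMajorant ρ C₃ k₀ y :=
  have : Nonempty X := ⟨y⟩
  le_ciInf fun x => h.le_admissibleBound x y

lemma admissibleMajorant_le (h : IsAdmissible ρ C₃ k₀) (hk₀ : 0 ≤ k₀) (y : X) :
    admissibleMajorant ρ C₃ k₀ y ≤ C₃ * ρ y := by
  have := ciInf_le (h.bddBelow_admissibleBound hk₀ y) y
  rwa [dist_self, admissibleBound.zero_right hk₀ (h.pos y)] at this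

lemma admissibleMajorant_le_two_mul_sq_max (h : IsAdmissible ρ C₃ k₀) (hk₀ : 0 ≤ k₀) (x y : X) :
    admissibleMajorant ρ C₃ k₀ y ≤ 2 * C₃ ^ 2 * max (ρ x) (dist x y) :=
  calc admissibleMajorant ρ C₃ k₀ y ≤ C₃ * ρ y := h.admissibleMajorant_le hk₀ y
    _ ≤ C₃ * (2 * C₃ * max (ρ x) (dist x y)) := by
        gcongr
        · linarith [h.one_le hk₀ x]
        · exact h.le_two_mul_max hk₀ x y
    _ = 2 * C₃ ^ 2 * max (ρ x) (dist x y) := by ring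

lemma le_of_admissibleMajorant_le (h : IsAdmissible ρ C₃ k₀) (hk₀ : 0 ≤ k₀) {x y : X}
    (hxy : 0 < dist x y) (hR : admissibleMajorant ρ C₃ k₀ y ≤ dist x y) :
    ρ x ≤ 2 * C₃ * (admissibleMajorant ρ C₃ k₀ y / dist x y) ^ (1 / (1 + k₀)) * dist x y := by
  have hC₃ : 0 ≤ C₃ := zero_le_one.trans (h.one_le hk₀ x)
  calc ρ x ≤ admissibleBound C₃ k₀ (ρ y) (dist x y) := dist_comm y x ▸ h.le_admissibleBound y x
    _ ≤ admissibleBound C₃ k₀ (admissibleMajorant ρ C₃ k₀ y) (dist x y) :=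
        admissibleBound.mono_left hk₀ hC₃ (h.pos y).le (h.le_admissibleMajorant y) hxy.le
    _ ≤ _ := admissibleBound.le_of_le hk₀ hC₃ ((h.pos y).trans_le (h.le_admissibleMajorant y)).le
        hR hxy

lemma measurable_admissibleMajorant [MeasurableSpace X] [OpensMeasurableSpace X]
    (h : IsAdmissible ρ C₃ k₀) (hk₀ : 0 ≤ k₀) : Measurable (admissibleMajorant ρ C₃ k₀) := by
  refine UpperSemicontinuous.measurable <| upperSemicontinuous_ciInf
    (h.bddBelow_admissibleBound hk₀) fun x => Continuous.upperSemicontinuous ?_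
  have hb : 0 ≤ k₀ / (1 + k₀) := by positivity
  unfold admissibleBound
  exact continuous_const.mul
    ((continuous_const.add (continuous_const.dist continuous_id)).rpow_const fun _ => Or.inr hb)

end IsAdmissible

-- The size bound on `E_t(x, y)` without the constant, with `r = ρ x`, `d = dist x y`,
-- `mt = μ (B(x, t))` and `md = μ (B(x, d))`.
noncomputable def sizeProfile (δ₁ δ₂ t d r mt md : ℝ) : ℝ :=
  (mt + md)⁻¹ * (t / (t + d)) ^ δ₂ * (t / (t + r)) ^ δ₁

section SizeProfile

variable {t d r mt md δ₁ δ₂ : ℝ}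

lemma min_one_rpow_le_rpow {x γ ε : ℝ} (hx : 0 < x) (hγ : 0 ≤ γ) (hγε : γ ≤ ε) :
    min 1 x ^ ε ≤ x ^ γ :=
  calc min 1 x ^ ε ≤ min 1 x ^ γ :=
        Real.rpow_le_rpow_of_exponent_ge (lt_min one_pos hx) (min_le_left _ _) hγε
    _ ≤ x ^ γ := Real.rpow_le_rpow (lt_min one_pos hx).le (min_le_right _ _) hγ

lemma mul_sizeProfile_le_far (ht : 0 < t) (hd : 0 < d) (htr : t < r) (hmt : 0 ≤ mt)
    (hmd : 0 ≤ md) (hδ₁ : 0 ≤ δ₁) (hδ₂ : 0 ≤ δ₂) :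
    md * sizeProfile δ₁ δ₂ t d r mt md ≤ min 1 (r / d) ^ δ₂ := by
  have hr : 0 < r := ht.trans htr
  have hm : md / (mt + md) ≤ 1 := div_le_one_of_le₀ (by linarith) (by linarith)
  have hu : t / (t + d) ≤ min 1 (r / d) := le_min ((div_le_one (by linarith)).2 (by linarith))
    ((div_le_div_of_nonneg_left ht.le hd (by linarith)).trans (by gcongr))
  have hv : (t / (t + r)) ^ δ₁ ≤ 1 :=
    Real.rpow_le_one (by positivity) ((div_le_one (by linarith)).2 (by linarith)) hδ₁
  calc md * sizeProfile δ₁ δ₂ t d r mt md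
      = md / (mt + md) * ((t / (t + d)) ^ δ₂ * (t / (t + r)) ^ δ₁) := by
        rw [sizeProfile]; ring
    _ ≤ 1 * (min 1 (r / d) ^ δ₂ * 1) :=
        mul_le_mul hm (mul_le_mul (Real.rpow_le_rpow (by positivity) hu hδ₂) hv
          (by positivity) (by positivity)) (by positivity) zero_le_one
    _ = min 1 (r / d) ^ δ₂ := by ring

lemma div_add_le_mul_rpow_of_le {C₂ κ : ℝ} (ht : 0 < t) (hd : 0 < d) (hmd : 0 < md)
    (hC₂ : 0 < C₂) (h : C₂⁻¹ * (t / d) ^ κ * md ≤ mt) : md / (mt + md) ≤ C₂ * (d / t) ^ κ := by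
  have hinv : (d / t) ^ κ * (t / d) ^ κ = 1 := by
    rw [← Real.mul_rpow (by positivity) (by positivity), div_mul_div_cancel₀ ht.ne',
      div_self hd.ne', Real.one_rpow]
  rw [div_le_iff₀ (by linarith [(by positivity : 0 ≤ C₂⁻¹ * (t / d) ^ κ * md)])]
  calc md = (C₂ * C₂⁻¹) * ((d / t) ^ κ * (t / d) ^ κ) * md := by
        rw [mul_inv_cancel₀ hC₂.ne', hinv]; ring
    _ = C₂ * (d / t) ^ κ * (C₂⁻¹ * (t / d) ^ κ * md) := by ring
    _ ≤ C₂ * (d / t) ^ κ * (mt + md) := by gcongr; linarith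

-- For `t ≤ d` the factor `t / (t + r)` is at most `d / r`; for `d < t` reverse doubling supplies
-- the factor `(d / t) ^ κ`.
lemma mul_sizeProfile_le_near {C₂ κ ε : ℝ} (ht : 0 < t) (hd : 0 < d) (htr : t < r)
    (hmt : 0 ≤ mt) (hmd : 0 < md) (hC₂ : 1 ≤ C₂)
    (hrev : d < t → C₂⁻¹ * (t / d) ^ κ * md ≤ mt) (hε : 0 ≤ ε) (hεκ : ε ≤ κ) (hεδ₁ : ε ≤ δ₁)
    (hδ₂ : 0 ≤ δ₂) :
    md * sizeProfile δ₁ δ₂ t d r mt md ≤ C₂ * min 1 (d / r) ^ ε := by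
  have hr : 0 < r := ht.trans htr
  have hu : (t / (t + d)) ^ δ₂ ≤ 1 :=
    Real.rpow_le_one (by positivity) ((div_le_one (by linarith)).2 (by linarith)) hδ₂
  have hv : t / (t + r) ≤ t / r := div_le_div_of_nonneg_left ht.le hr (by linarith)
  rcases le_or_gt t d with htd | hdt
  · have hm : md / (mt + md) ≤ 1 := div_le_one_of_le₀ (by linarith) (by linarith)
    have hvd : t / (t + r) ≤ min 1 (d / r) :=
      le_min ((div_le_one (by linarith)).2 (by linarith)) (hv.trans (by gcongr))
    have hmin : 0 < min 1 (d / r) := lt_min one_pos (by positivity)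
    calc md * sizeProfile δ₁ δ₂ t d r mt md
        = md / (mt + md) * ((t / (t + d)) ^ δ₂ * (t / (t + r)) ^ δ₁) := by
          rw [sizeProfile]; ring
      _ ≤ 1 * (1 * min 1 (d / r) ^ δ₁) :=
          mul_le_mul hm (mul_le_mul hu (Real.rpow_le_rpow (by positivity) hvd (by linarith))
            (by positivity) zero_le_one) (by positivity) zero_le_one
      _ ≤ C₂ * min 1 (d / r) ^ ε := by
          rw [one_mul, one_mul]
          exact (Real.rpow_le_rpow_of_exponent_ge hmin (min_le_left _ _) hεδ₁).trans
            (le_mul_of_one_le_left (by positivity) hC₂)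
  · have hdr : d / r ≤ 1 := (div_le_one hr).2 (by linarith)
    have hm := div_add_le_mul_rpow_of_le ht hd hmd (by linarith) (hrev hdt)
    calc md * sizeProfile δ₁ δ₂ t d r mt md
        = md / (mt + md) * ((t / (t + d)) ^ δ₂ * (t / (t + r)) ^ δ₁) := by
          rw [sizeProfile]; ring
      _ ≤ C₂ * (d / t) ^ ε * (1 * (t / r) ^ ε) := by
          refine mul_le_mul (hm.trans ?_) (mul_le_mul hu ?_ (by positivity) zero_le_one)
            (by positivity) (by positivity)
          · exact mul_le_mul_of_nonneg_left (Real.rpow_le_rpow_of_exponent_ge (by positivity)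
              ((div_le_one ht).2 hdt.le) hεκ) (by positivity)
          · exact (Real.rpow_le_rpow (by positivity) hv (by linarith)).trans
              (Real.rpow_le_rpow_of_exponent_ge (by positivity) ((div_le_one hr).2 htr.le) hεδ₁)
      _ = C₂ * min 1 (d / r) ^ ε := by
          rw [min_eq_right hdr, one_mul, mul_assoc, ← Real.mul_rpow (by positivity) (by positivity),
            div_mul_div_cancel₀ ht.ne']

lemma min_one_div_le_min_one_mul_div {r d R C : ℝ} (hr : 0 < r) (hd : 0 ≤ d) (hR : 0 < R)
    (h : R ≤ C * max r d) : min 1 (d / r) ≤ min 1 (C * (d / R)) := by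
  refine le_min (min_le_left _ _) ?_
  rcases le_total d r with hdr | hrd
  · rw [max_eq_left hdr] at h
    calc min 1 (d / r) ≤ d / r := min_le_right _ _
      _ ≤ C * (d / R) := by
          rw [mul_div_assoc', div_le_div_iff₀ hr hR]; nlinarith [mul_le_mul_of_nonneg_left h hd]
  · rw [max_eq_right hrd] at h
    exact (min_le_left _ _).trans (by rw [mul_div_assoc', one_le_div hR]; exact h)

lemma min_one_div_le_mul_min_one_div_rpow {r d R K a : ℝ} (hd : 0 < d) (hK : 1 ≤ K)
    (h : R ≤ d → r ≤ K * (R / d) ^ a * d) : min 1 (r / d) ≤ K * min 1 (R / d) ^ a := by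
  rcases le_or_gt R d with hRd | hdR
  · rw [min_eq_right ((div_le_one hd).2 hRd)]
    exact (min_le_right _ _).trans ((div_le_iff₀ hd).2 (h hRd))
  · rw [min_eq_left ((one_le_div hd).2 hdR.le), Real.one_rpow, mul_one]
    exact (min_le_left _ _).trans hK

lemma mul_sizeProfile_le_weight {C₂ C₃ κ a γ R : ℝ} (ht : 0 < t) (hd : 0 < d) (htr : t < r)
    (hmt : 0 ≤ mt) (hmd : 0 < md) (hC₂ : 1 ≤ C₂) (hC₃ : 1 ≤ C₃)
    (hrev : d < t → C₂⁻¹ * (t / d) ^ κ * md ≤ mt) (hR : 0 < R)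
    (hnear : R ≤ 2 * C₃ ^ 2 * max r d) (hfar : R ≤ d → r ≤ 2 * C₃ * (R / d) ^ a * d)
    (hδ₁ : 0 ≤ δ₁) (hδ₂ : 0 ≤ δ₂) (hγ : 0 ≤ γ) (hγκ : γ ≤ κ) (hγδ₁ : γ ≤ δ₁)
    (hγδ₂ : γ ≤ a * δ₂) :
    md * sizeProfile δ₁ δ₂ t d r mt md ≤
      C₂ * (2 * C₃) ^ δ₂ * (2 * C₃ ^ 2 * min (d / R) (R / d)) ^ γ := by
  have hr : 0 < r := ht.trans htr
  have hC : 1 ≤ 2 * C₃ ^ 2 := by nlinarith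
  have hC₂' : 1 ≤ (2 * C₃) ^ δ₂ := Real.one_le_rpow (by linarith) hδ₂
  have hnear' : md * sizeProfile δ₁ δ₂ t d r mt md ≤
      C₂ * (2 * C₃ ^ 2 * (d / R)) ^ γ := by
    refine (mul_sizeProfile_le_near ht hd htr hmt hmd hC₂ hrev hγ hγκ hγδ₁ hδ₂).trans
      (mul_le_mul_of_nonneg_left ?_ (by linarith))
    calc min 1 (d / r) ^ γ ≤ min 1 (2 * C₃ ^ 2 * (d / R)) ^ γ :=
          Real.rpow_le_rpow (lt_min one_pos (by positivity)).le
            (min_one_div_le_min_one_mul_div hr hd.le hR hnear) hγ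
      _ ≤ (2 * C₃ ^ 2 * (d / R)) ^ γ := min_one_rpow_le_rpow (by positivity) hγ le_rfl
  have hfar' : md * sizeProfile δ₁ δ₂ t d r mt md ≤
      (2 * C₃) ^ δ₂ * (2 * C₃ ^ 2 * (R / d)) ^ γ := by
    refine (mul_sizeProfile_le_far ht hd htr hmt hmd.le hδ₁ hδ₂).trans ?_
    calc min 1 (r / d) ^ δ₂ ≤ (2 * C₃ * min 1 (R / d) ^ a) ^ δ₂ :=
          Real.rpow_le_rpow (lt_min one_pos (by positivity)).le
            (min_one_div_le_mul_min_one_div_rpow hd (by linarith) hfar) hδ₂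
      _ = (2 * C₃) ^ δ₂ * min 1 (R / d) ^ (a * δ₂) := by
          rw [Real.mul_rpow (by linarith) (by positivity),
            Real.rpow_mul (lt_min one_pos (by positivity)).le]
      _ ≤ (2 * C₃) ^ δ₂ * (R / d) ^ γ := by
          gcongr; exact min_one_rpow_le_rpow (by positivity) hγ hγδ₂
      _ ≤ (2 * C₃) ^ δ₂ * (2 * C₃ ^ 2 * (R / d)) ^ γ := by
          gcongr; exact le_mul_of_one_le_left (by positivity) hC
  rcases le_total (d / R) (R / d) with h | h
  · calc _ ≤ C₂ * (2 * C₃ ^ 2 * (d / R)) ^ γ := hnear'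
      _ ≤ (2 * C₃) ^ δ₂ * (C₂ * (2 * C₃ ^ 2 * (d / R)) ^ γ) :=
          le_mul_of_one_le_left (by positivity) hC₂'
      _ = _ := by rw [min_eq_left h]; ring
  · calc _ ≤ (2 * C₃) ^ δ₂ * (2 * C₃ ^ 2 * (R / d)) ^ γ := hfar'
      _ ≤ C₂ * ((2 * C₃) ^ δ₂ * (2 * C₃ ^ 2 * (R / d)) ^ γ) :=
          le_mul_of_one_le_left (by positivity) hC₂
      _ = _ := by rw [min_eq_right h]; ring

end SizeProfile

section Kernel

variable {X : Type*} [MetricSpace X] [MeasurableSpace X] {μ : Measure X}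

noncomputable def dominatingKernel (μ : Measure X) (R : X → ℝ) (A C γ : ℝ) (x y : X) : ℝ≥0∞ :=
  ENNReal.ofReal (A * (C * min (dist x y / R y) (R y / dist x y)) ^ γ) / μ (ball y (dist x y))

theorem measurable_dominatingKernel [OpensMeasurableSpace X] [SecondCountableTopology X] [SFinite μ]
    {R : X → ℝ} (hR : Measurable R) (A C γ : ℝ) :
    Measurable (Function.uncurry (dominatingKernel μ R A C γ)) := by
  have hd : Measurable fun p : X × X => dist p.1 p.2 := continuous_dist.measurable
  have hRy : Measurable fun p : X × X => R p.2 := hR.comp measurable_snd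
  refine Measurable.div ?_ (measurable_measure_ball.comp (measurable_snd.prodMk hd))
  exact (measurable_const.mul ((measurable_const.mul ((hd.div hRy).min (hRy.div hd))).pow_const
    γ)).ennreal_ofReal

theorem lintegral_dominatingKernel_le {D : ℝ} {R : X → ℝ} {y : X} (hD : 0 ≤ D) (hR : 0 < R y)
    (hy : μ {y} = 0) (hdouble : ∀ r, μ (ball y (2 * r)) ≤ ENNReal.ofReal D * μ (ball y r))
    {A C γ : ℝ} (hA : 0 ≤ A) (hC : 0 ≤ C) (hγ : 0 < γ) :
    ∫⁻ x, dominatingKernel μ R A C γ x y ∂μ ≤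
      ENNReal.ofReal (D * (A * (2 * C) ^ γ) * ((1 + 2⁻¹ ^ γ) / (1 - 2⁻¹ ^ γ))) := by
  have hq : (2⁻¹ : ℝ) ^ γ < 1 := Real.rpow_lt_one (by norm_num) (by norm_num) hγ
  have hφ : ∀ j : ℤ, ∀ s ∈ Set.Ico ((2 : ℝ) ^ j) (2 ^ (j + 1)),
      ENNReal.ofReal (A * (C * min s s⁻¹) ^ γ) ≤
        ENNReal.ofReal (A * (2 * C) ^ γ) * ENNReal.ofReal (2⁻¹ ^ γ) ^ j.natAbs := by
    intro j s hs
    have hs0 : 0 < s := (zpow_pos two_pos j).trans_le hs.1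
    rw [← ENNReal.ofReal_pow (by positivity), ← ENNReal.ofReal_mul (by positivity)]
    refine ENNReal.ofReal_le_ofReal ?_
    calc A * (C * min s s⁻¹) ^ γ ≤ A * (C * (2 * 2⁻¹ ^ j.natAbs)) ^ γ := by
          gcongr
          exact min_self_inv_le_of_mem_Ico hs
      _ = A * (2 * C) ^ γ * (2⁻¹ ^ γ) ^ j.natAbs := by
          rw [Real.rpow_pow_comm (by norm_num), mul_assoc A,
            ← Real.mul_rpow (by positivity) (by positivity)]
          ring_nf
  calc ∫⁻ x, dominatingKernel μ R A C γ x y ∂μ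
      = ∫⁻ x, ENNReal.ofReal (A * (C * min (dist x y / R y) (dist x y / R y)⁻¹) ^ γ) /
          μ (ball y (dist x y)) ∂μ := by simp only [dominatingKernel, inv_div]
    _ ≤ ENNReal.ofReal D *
          ∑' j : ℤ, ENNReal.ofReal (A * (2 * C) ^ γ) * ENNReal.ofReal (2⁻¹ ^ γ) ^ j.natAbs :=
        lintegral_div_measure_ball_le hR hy hdouble
          (fun s => ENNReal.ofReal (A * (C * min s s⁻¹) ^ γ)) _ hφ
    _ = ENNReal.ofReal (D * (A * (2 * C) ^ γ) * ((1 + 2⁻¹ ^ γ) / (1 - 2⁻¹ ^ γ))) := by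
        rw [ENNReal.tsum_mul_left, ENNReal.tsum_pow_natAbs,
          ENNReal.ofReal_mul (by positivity : 0 ≤ D * (A * (2 * C) ^ γ)), ENNReal.ofReal_mul hD,
          ENNReal.ofReal_div_of_pos (by linarith), ENNReal.ofReal_add zero_le_one (by positivity),
          ENNReal.ofReal_sub _ (by positivity), ENNReal.ofReal_one, div_eq_mul_inv, mul_assoc]

theorem IsAdmissible.enorm_le_dominatingKernel {ρ : X → ℝ} {C₃ k₀ : ℝ}
    (hρ : IsAdmissible ρ C₃ k₀) (hk₀ : 0 ≤ k₀) {C₂ κ CD CE δ₁ δ₂ γ t e : ℝ} {x y : X}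
    (hballs : ∀ z r, 0 < r → 0 < μ (ball z r) ∧ μ (ball z r) < ∞) (hC₂ : 1 ≤ C₂)
    (hrev : ∀ r lam : ℝ, 0 < r → 1 ≤ lam →
      C₂⁻¹ * lam ^ κ * (μ (ball x r)).toReal ≤ (μ (ball x (lam * r))).toReal)
    (hCD : 0 ≤ CD)
    (hdouble : ∀ r, 0 < r → (μ (ball x (2 * r))).toReal ≤ CD * (μ (ball x r)).toReal)
    (hCE : 0 ≤ CE) (hδ₁ : 0 ≤ δ₁) (hδ₂ : 0 ≤ δ₂) (hγ : 0 ≤ γ) (hγκ : γ ≤ κ) (hγδ₁ : γ ≤ δ₁)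
    (hγδ₂ : γ ≤ 1 / (1 + k₀) * δ₂) (hxy : x ≠ y) (ht : 0 < t) (htρ : t < ρ x)
    (hE : |e| ≤ CE * ((μ (ball x t)).toReal + (μ (ball x (dist x y))).toReal)⁻¹ *
      (t / (t + dist x y)) ^ δ₂ * (t / (t + ρ x)) ^ δ₁) :
    ‖e‖ₑ ≤ dominatingKernel μ (admissibleMajorant ρ C₃ k₀) (CE * CD * C₂ * (2 * C₃) ^ δ₂)
      (2 * C₃ ^ 2) γ x y := by
  set d := dist x y
  set R := admissibleMajorant ρ C₃ k₀ y
  have hd : 0 < d := dist_pos.2 hxy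
  have hC₃ : 1 ≤ C₃ := hρ.one_le hk₀ x
  have hR : 0 < R := (hρ.pos y).trans_le (hρ.le_admissibleMajorant y)
  have hmd : 0 < (μ (ball x d)).toReal :=
    ENNReal.toReal_pos (hballs x d hd).1.ne' (hballs x d hd).2.ne
  have hM : (μ (ball y d)).toReal ≤ CD * (μ (ball x d)).toReal :=
    (ENNReal.toReal_mono (hballs x (2 * d) (by positivity)).2.ne
      (measure_mono (ball_subset_ball' (by rw [dist_comm]; linarith)))).trans (hdouble d hd)
  have hrev' : d < t → C₂⁻¹ * (t / d) ^ κ * (μ (ball x d)).toReal ≤ (μ (ball x t)).toReal :=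
    fun hdt => by
      simpa [div_mul_cancel₀ _ hd.ne'] using hrev d (t / d) hd ((one_le_div hd).2 hdt.le)
  have hweight := mul_sizeProfile_le_weight ht hd htρ ENNReal.toReal_nonneg hmd hC₂ hC₃ hrev' hR
    (hρ.admissibleMajorant_le_two_mul_sq_max hk₀ x y) (hρ.le_of_admissibleMajorant_le hk₀ hd)
    hδ₁ hδ₂ hγ hγκ hγδ₁ hγδ₂
  have hreal : |e| * (μ (ball y d)).toReal ≤
      CE * CD * C₂ * (2 * C₃) ^ δ₂ * (2 * C₃ ^ 2 * min (d / R) (R / d)) ^ γ :=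
    calc |e| * (μ (ball y d)).toReal
        ≤ (CE * ((μ (ball x t)).toReal + (μ (ball x d)).toReal)⁻¹ * (t / (t + d)) ^ δ₂ *
            (t / (t + ρ x)) ^ δ₁) * (CD * (μ (ball x d)).toReal) :=
          mul_le_mul hE hM ENNReal.toReal_nonneg ((abs_nonneg e).trans hE)
      _ = CE * CD * ((μ (ball x d)).toReal *
            sizeProfile δ₁ δ₂ t d (ρ x) (μ (ball x t)).toReal (μ (ball x d)).toReal) := by
          rw [sizeProfile]; ring
      _ ≤ CE * CD * (C₂ * (2 * C₃) ^ δ₂ * (2 * C₃ ^ 2 * min (d / R) (R / d)) ^ γ) := by gcongr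
      _ = _ := by ring
  rw [Real.enorm_eq_ofReal_abs, dominatingKernel, ENNReal.le_div_iff_mul_le
    (Or.inl (hballs y d hd).1.ne') (Or.inl (hballs y d hd).2.ne),
    ← ENNReal.ofReal_toReal (hballs y d hd).2.ne, ← ENNReal.ofReal_mul (abs_nonneg e)]
  exact ENNReal.ofReal_le_ofReal hreal

end Kernel

section Maximal

variable {α : Type*} [MeasurableSpace α] {μ : Measure α}

theorem ofReal_abs_integral_mul_le {k : α → ℝ} {K : α → ℝ≥0∞} (hk : ∀ᵐ y ∂μ, ‖k y‖ₑ ≤ K y)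
    (f : α → ℝ) : ENNReal.ofReal |∫ y, k y * f y ∂μ| ≤ ∫⁻ y, K y * ‖f y‖ₑ ∂μ := by
  rw [← Real.enorm_eq_ofReal_abs]
  refine (enorm_integral_le_lintegral_enorm _).trans (lintegral_mono_ae ?_)
  filter_upwards [hk] with y hy
  rw [enorm_mul]
  gcongr

theorem lintegral_lintegral_mul_le_of_forall_lintegral_le [SFinite μ] {K : α → α → ℝ≥0∞}
    (hK : Measurable (Function.uncurry K)) {B : ℝ≥0∞} (hB : ∀ y, ∫⁻ x, K x y ∂μ ≤ B)
    {g : α → ℝ≥0∞} (hg : AEMeasurable g μ) :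
    ∫⁻ x, ∫⁻ y, K x y * g y ∂μ ∂μ ≤ B * ∫⁻ y, g y ∂μ :=
  calc ∫⁻ x, ∫⁻ y, K x y * g y ∂μ ∂μ = ∫⁻ y, ∫⁻ x, K x y * g y ∂μ ∂μ :=
        lintegral_lintegral_swap (hK.aemeasurable.mul hg.comp_snd)
    _ = ∫⁻ y, (∫⁻ x, K x y ∂μ) * g y ∂μ :=
        lintegral_congr fun _ => lintegral_mul_const _ (hK.comp measurable_prodMk_right)
    _ ≤ ∫⁻ y, B * g y ∂μ := lintegral_mono fun y => mul_le_mul_left (hB y) _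
    _ = B * ∫⁻ y, g y ∂μ := lintegral_const_mul'' _ hg

theorem lintegral_iSup_ofReal_abs_integral_le [SFinite μ] {K : α → α → ℝ≥0∞}
    (hK : Measurable (Function.uncurry K)) {B : ℝ} (hB : 0 ≤ B)
    (hKB : ∀ y, ∫⁻ x, K x y ∂μ ≤ ENNReal.ofReal B) {ι : Type*} {p : α → ι → Prop}
    {k : ι → α → α → ℝ} (hk : ∀ x i, p x i → ∀ᵐ y ∂μ, ‖k i x y‖ₑ ≤ K x y) {f : α → ℝ}
    (hf : Integrable f μ) :
    ∫⁻ x, ⨆ (i : ι) (_ : p x i), ENNReal.ofReal |∫ y, k i x y * f y ∂μ| ∂μ ≤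
      ENNReal.ofReal (B * ∫ x, |f x| ∂μ) :=
  calc ∫⁻ x, ⨆ (i : ι) (_ : p x i), ENNReal.ofReal |∫ y, k i x y * f y ∂μ| ∂μ
      ≤ ∫⁻ x, ∫⁻ y, K x y * ‖f y‖ₑ ∂μ ∂μ :=
        lintegral_mono fun x => iSup₂_le fun i hi => ofReal_abs_integral_mul_le (hk x i hi) f
    _ ≤ ENNReal.ofReal B * ∫⁻ y, ‖f y‖ₑ ∂μ :=
        lintegral_lintegral_mul_le_of_forall_lintegral_le hK hKB hf.aemeasurable.enorm
    _ = ENNReal.ofReal (B * ∫ x, |f x| ∂μ) := by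
        rw [← ofReal_integral_norm_eq_lintegral_enorm hf, ← ENNReal.ofReal_mul hB]
        simp only [Real.norm_eq_abs]

end Maximal

theorem Erho_maximal_L1_bounded_general {X : Type*} [MetricSpace X]
    [MeasurableSpace X] [BorelSpace X] (μ : Measure X) (C₂ κ : ℝ) (hκ : 0 < κ) (hC₂ : 1 ≤ C₂)
    (hballs : ∀ (x : X) (r : ℝ), 0 < r → 0 < μ (ball x r) ∧ μ (ball x r) < ∞)
    (hrev : ∀ (x : X) (r lam : ℝ), 0 < r → 1 ≤ lam →
      C₂⁻¹ * lam ^ κ * (μ (ball x r)).toReal ≤ (μ (ball x (lam * r))).toReal)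
    (hdouble : ∃ C > 0, ∀ (x : X) (r : ℝ), 0 < r →
      (μ (ball x (2 * r))).toReal ≤ C * (μ (ball x r)).toReal)
    (ρ : X → ℝ) (C₃ k₀ : ℝ) (hρ : ∀ x, 0 < ρ x) (hC₃ : 0 < C₃) (hk₀ : 0 < k₀)
    (hadm : ∀ x y : X,
      ρ y ≤ C₃ * ρ x ^ (1 / (1 + k₀)) * (ρ x + dist x y) ^ (k₀ / (1 + k₀)))
    (Et : ℝ → X → X → ℝ) (CE δ₁ δ₂ : ℝ) (hCE : 0 < CE) (hδ₁ : 0 < δ₁) (hδ₂ : 0 < δ₂)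
    (hsize : ∀ (t : ℝ) (x y : X), 0 < t →
      |Et t x y| ≤ CE * ((μ (ball x t)).toReal + (μ (ball x (dist x y))).toReal)⁻¹ *
        (t / (t + dist x y)) ^ δ₂ * (t / (t + ρ x)) ^ δ₁) :
    ∃ C' > 0, ∀ f : X → ℝ, Integrable f μ →
      ∫⁻ x, ⨆ (t : ℝ) (_ : 0 < t ∧ t < ρ x),
          ENNReal.ofReal |∫ y, Et t x y * f y ∂μ| ∂μ ≤
        ENNReal.ofReal (C' * ∫ x, |f x| ∂μ) := by
  obtain ⟨CD, hCD, hdouble⟩ := hdouble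
  have hfin : ∀ x r, μ (ball x r) ≠ ∞ := fun x r => (le_or_gt r 0).elim
    (fun hr => by simp [ball_eq_empty.2 hr]) fun hr => (hballs x r hr).2.ne
  have hdouble' := measure_ball_two_mul_le_ofReal hCD.le hfin hdouble
  have : SecondCountableTopology X := secondCountableTopology_of_totallyBounded_ball <|
    totallyBounded_ball_of_doubling ofReal_ne_top (fun x r hr => (hballs x r hr).1.ne') hfin
      hdouble'
  have : IsLocallyFiniteMeasure μ :=
    ⟨fun x => ⟨ball x 1, ball_mem_nhds x one_pos, (hballs x 1 one_pos).2⟩⟩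
  have : SigmaFinite μ := sigmaFinite_of_locallyFinite
  have : NullSingletonClass μ :=
    ⟨fun z => measure_singleton_eq_zero_of_reverse_doubling (by linarith) hκ (hfin z) (hrev z)⟩
  have hadm : IsAdmissible ρ C₃ k₀ := ⟨hρ, hadm⟩
  set γ := min κ (min δ₁ (1 / (1 + k₀) * δ₂))
  have hγ : 0 < γ := lt_min hκ (lt_min hδ₁ (by positivity))
  set A := CE * CD * C₂ * (2 * C₃) ^ δ₂
  set B := CD * (A * (2 * (2 * C₃ ^ 2)) ^ γ) * ((1 + 2⁻¹ ^ γ) / (1 - 2⁻¹ ^ γ))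
  have hB : 0 < B := by
    have : 0 < 1 - (2⁻¹ : ℝ) ^ γ := sub_pos.2 (Real.rpow_lt_one (by norm_num) (by norm_num) hγ)
    positivity
  set K := dominatingKernel μ (admissibleMajorant ρ C₃ k₀) A (2 * C₃ ^ 2) γ
  have hK : Measurable (Function.uncurry K) :=
    measurable_dominatingKernel (hadm.measurable_admissibleMajorant hk₀.le) _ _ _
  refine ⟨B, hB, fun f hf => lintegral_iSup_ofReal_abs_integral_le hK hB.le (fun y => ?_)
    (fun x t ht => (Measure.ae_ne μ x).mono fun y hy => ?_) hf⟩
  · exact lintegral_dominatingKernel_le hCD.le ((hρ y).trans_le (hadm.le_admissibleMajorant y))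
      (measure_singleton y) (hdouble' y) (by positivity) (by positivity) hγ
  · exact hadm.enorm_le_dominatingKernel hk₀.le hballs hC₂ (hrev x) hCD.le (hdouble x) hCE.le
      hδ₁.le hδ₂.le hγ.le (min_le_left _ _) ((min_le_right _ _).trans (min_le_left _ _))
      ((min_le_right _ _).trans (min_le_right _ _)) hy.symm ht.1 ht.2 (hsize t x y ht.1)

/-- Lemma 4.4: the localized maximal operator E_ρ⁺ associated with kernels E_t
satisfying a ρ-localized size estimate is bounded on L¹(X). -/
theorem Erho_maximal_L1_bounded {X : Type*} [MetricSpace X]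
    [MeasurableSpace X] [BorelSpace X] (μ : Measure X) (C₂ κ : ℝ) (hκ : 0 < κ) (hC₂ : 1 ≤ C₂)
    (hballs : ∀ (x : X) (r : ℝ), 0 < r → 0 < μ (ball x r) ∧ μ (ball x r) < ∞)
    (hrev : ∀ (x : X) (r lam : ℝ), 0 < r → 1 ≤ lam →
      C₂⁻¹ * lam ^ κ * (μ (ball x r)).toReal ≤ (μ (ball x (lam * r))).toReal)
    (hdouble : ∃ C > 0, ∀ (x : X) (r : ℝ), 0 < r →
      (μ (ball x (2 * r))).toReal ≤ C * (μ (ball x r)).toReal)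
    (hinf : μ Set.univ = ∞)
    (ρ : X → ℝ) (C₃ k₀ : ℝ) (hρ : ∀ x, 0 < ρ x) (hC₃ : 0 < C₃) (hk₀ : 0 < k₀)
    (hadm : ∀ x y : X,
      ρ y ≤ C₃ * ρ x ^ (1 / (1 + k₀)) * (ρ x + dist x y) ^ (k₀ / (1 + k₀)))
    (Et : ℝ → X → X → ℝ) (CE δ₁ δ₂ : ℝ) (hCE : 0 < CE) (hδ₁ : 0 < δ₁) (hδ₂ : 0 < δ₂)
    (hEnonneg : ∀ (t : ℝ) (x y : X), 0 < t → 0 ≤ Et t x y)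
    (hsize : ∀ (t : ℝ) (x y : X), 0 < t →
      |Et t x y| ≤ CE * ((μ (ball x t)).toReal + (μ (ball x (dist x y))).toReal)⁻¹ *
        (t / (t + dist x y)) ^ δ₂ * (t / (t + ρ x)) ^ δ₁) :
    ∃ C' > 0, ∀ f : X → ℝ, Integrable f μ →
      ∫⁻ x, ⨆ (t : ℝ) (_ : 0 < t ∧ t < ρ x),
          ENNReal.ofReal |∫ y, Et t x y * f y ∂μ| ∂μ ≤
        ENNReal.ofReal (C' * ∫ x, |f x| ∂μ) :=
  Erho_maximal_L1_bounded_general μ C₂ κ hκ hC₂ hballs hrev hdouble ρ C₃ k₀ hρ hC₃ hk₀ hadm Et CE δ₁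
    δ₂ hCE hδ₁ hδ₂ hsize
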